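/- Let G be a finite simple graph containing two edges {u,w}, {v,w} ∈ E(G) with deg(u) = deg(v) = 1. Then min-match(G∖v) = min-match(G), where G∖v is the induced subgraph of G on V(G)∖{v}. -/

import Mathlib

/-!
A matching is maximal iff the vertices it covers meet every edge. Let `u`, `v` be leaves at `w`.
A maximal matching of `G ∖ v` covers `w`, because `u` is still a leaf at `w` there, so it stays
maximal in `G`: the only new edge `vw` meets it. Conversely, the transposition of the twins `u`
and `v` is an automorphism of `G`, and a matching covers at most one of them; applying it if
necessary, a minimum maximal matching of `G` avoids `v`, hence is a maximal matching of `G ∖ v`.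
-/

namespace MatchingPaper

variable {V : Type*}

/-- `M` is a matching of `G` : a finite set of edges of `G` that are pairwise disjoint. -/
def IsMatching (G : SimpleGraph V) (M : Finset (Sym2 V)) : Prop :=
  (↑M : Set (Sym2 V)) ⊆ G.edgeSet ∧
    ∀ e ∈ M, ∀ f ∈ M, e ≠ f → ∀ v : V, v ∈ e → v ∉ f

open Classical in
/-- `M` is a maximal matching of `G` : adding any further edge of `G` destroys
the matching property. -/
def IsMaximalMatching (G : SimpleGraph V) (M : Finset (Sym2 V)) : Prop :=
  IsMatching G M ∧ ∀ e ∈ G.edgeSet, e ∉ M → ¬ IsMatching G (insert e M)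

/-- `M` is an induced matching of `G` : a matching such that no edge of `G`
meets two distinct edges of `M`. -/
def IsInducedMatching (G : SimpleGraph V) (M : Finset (Sym2 V)) : Prop :=
  IsMatching G M ∧
    ∀ e ∈ M, ∀ f ∈ M, e ≠ f → ∀ g ∈ G.edgeSet,
      (∃ v : V, v ∈ g ∧ v ∈ e) → ¬ ∃ v : V, v ∈ g ∧ v ∈ f

/-- The matching number `match(G)` : the maximum size of a matching of `G`. -/
noncomputable def matchNum (G : SimpleGraph V) : ℕ :=
  sSup {n : ℕ | ∃ M : Finset (Sym2 V), IsMatching G M ∧ M.card = n}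

/-- The minimum matching number `min-match(G)` : the minimum size of a maximal
matching of `G`. -/
noncomputable def minMatchNum (G : SimpleGraph V) : ℕ :=
  sInf {n : ℕ | ∃ M : Finset (Sym2 V), IsMaximalMatching G M ∧ M.card = n}

/-- The induced matching number `ind-match(G)` : the maximum size of an induced
matching of `G`. -/
noncomputable def indMatchNum (G : SimpleGraph V) : ℕ :=
  sSup {n : ℕ | ∃ M : Finset (Sym2 V), IsInducedMatching G M ∧ M.card = n}

def verts (M : Finset (Sym2 V)) : Set V := {x | ∃ e ∈ M, x ∈ e}

section

variable {W : Type*} {G : SimpleGraph V} {H : SimpleGraph W} {M : Finset (Sym2 V)}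
  {e : Sym2 V} {u v w : V}

lemma mem_verts_map (f : V ↪ W) : f v ∈ verts (M.map f.sym2Map) ↔ v ∈ verts M := by
  simp only [verts, Set.mem_ofPred_eq, Finset.mem_map, Function.Embedding.sym2Map_apply]
  constructor
  · rintro ⟨_, ⟨e, he, rfl⟩, hv⟩
    obtain ⟨x, hx, hxv⟩ := Sym2.mem_map.mp hv
    exact ⟨e, he, f.injective hxv ▸ hx⟩
  · rintro ⟨e, he, hv⟩
    exact ⟨_, ⟨e, he, rfl⟩, Sym2.mem_map.mpr ⟨v, hv, rfl⟩⟩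

lemma exists_map_eq_of_verts_subset_range (f : W ↪ V) (h : verts M ⊆ Set.range f) :
    ∃ N : Finset (Sym2 W), N.map f.sym2Map = M := by
  classical
  refine ⟨M.preimage f.sym2Map f.sym2Map.injective.injOn, ?_⟩
  rw [Finset.map_eq_image, Finset.image_preimage, Finset.filter_true_of_mem]
  intro e he
  induction e using Sym2.ind with
  | _ a b =>
    obtain ⟨a, rfl⟩ := h ⟨_, he, Sym2.mem_mk_left a b⟩
    obtain ⟨b, rfl⟩ := h ⟨_, he, Sym2.mem_mk_right _ b⟩
    exact ⟨s(a, b), rfl⟩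

lemma IsMatching.insert [DecidableEq V] (hM : IsMatching G M) (he : e ∈ G.edgeSet)
    (hfree : ∀ x ∈ e, x ∉ verts M) : IsMatching G (insert e M) := by
  refine ⟨by simpa [Set.insert_subset_iff] using ⟨he, hM.1⟩, ?_⟩
  simp only [Finset.mem_insert]
  rintro f (rfl | hf) g (rfl | hg) hfg x hxf hxg
  · exact hfg rfl
  · exact hfree x hxf ⟨g, hg, hxg⟩
  · exact hfree x hxg ⟨f, hf, hxf⟩
  · exact hM.2 f hf g hg hfg x hxf hxg

lemma isMaximalMatching_iff :
    IsMaximalMatching G M ↔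
      IsMatching G M ∧ ∀ a b, G.Adj a b → a ∈ verts M ∨ b ∈ verts M := by
  classical
  refine and_congr_right fun hM => ⟨fun hmax a b hab => ?_, fun hcov e he heM hins => ?_⟩
  · by_contra! h
    have hab_free : ∀ x ∈ s(a, b), x ∉ verts M := by simpa using h
    exact hmax _ hab (fun habM => h.1 ⟨_, habM, Sym2.mem_mk_left a b⟩) (hM.insert hab hab_free)
  · induction e using Sym2.ind with
    | _ a b =>
      obtain ⟨x, hx, f, hf, hxf⟩ : ∃ x ∈ s(a, b), x ∈ verts M := by
        simpa using hcov a b he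
      exact hins.2 _ (Finset.mem_insert_self _ M) f (Finset.mem_insert_of_mem hf)
        (fun h => heM (h ▸ hf)) x hx hxf

lemma isMatching_map_iff (φ : G ↪g H) :
    IsMatching H (M.map φ.toEmbedding.sym2Map) ↔ IsMatching G M := by
  have hmem {x : V} {e : Sym2 V} : φ x ∈ e.map φ ↔ x ∈ e := by
    rw [Sym2.mem_map]
    exact ⟨fun ⟨y, hy, hyx⟩ => φ.injective hyx ▸ hy, fun hx => ⟨x, hx, rfl⟩⟩
  constructor
  · rintro ⟨hsub, hdisj⟩
    refine ⟨fun e he => φ.map_mem_edgeSet_iff.mp (hsub (Finset.mem_map_of_mem _ he)),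
      fun e he f hf hef x hxe hxf => ?_⟩
    exact hdisj _ (Finset.mem_map_of_mem _ he) _ (Finset.mem_map_of_mem _ hf)
      (φ.toEmbedding.sym2Map.injective.ne hef) (φ x) (hmem.mpr hxe) (hmem.mpr hxf)
  · rintro ⟨hsub, hdisj⟩
    refine ⟨?_, ?_⟩
    · intro _ he
      obtain ⟨e, heM, rfl⟩ := Finset.mem_map.mp he
      exact φ.map_mem_edgeSet_iff.mpr (hsub heM)
    · simp only [Finset.mem_map]
      rintro _ ⟨e, he, rfl⟩ _ ⟨f, hf, rfl⟩ hef x hxe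
      obtain ⟨x, hx, rfl⟩ := Sym2.mem_map.mp hxe
      exact mt hmem.mp (hdisj e he f hf (ne_of_apply_ne _ hef) x hx)

lemma IsMaximalMatching.of_map (φ : G ↪g H)
    (hM : IsMaximalMatching H (M.map φ.toEmbedding.sym2Map)) : IsMaximalMatching G M := by
  rw [isMaximalMatching_iff] at hM ⊢
  refine ⟨(isMatching_map_iff φ).mp hM.1, fun a b hab => ?_⟩
  exact (hM.2 _ _ (φ.map_adj_iff.mpr hab)).imp (mem_verts_map φ.toEmbedding).mp
    (mem_verts_map φ.toEmbedding).mp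

lemma IsMaximalMatching.map (φ : G ↪g H) (hM : IsMaximalMatching G M)
    (hout : ∀ a b, H.Adj a b → a ∉ Set.range φ → b ∈ verts (M.map φ.toEmbedding.sym2Map)) :
    IsMaximalMatching H (M.map φ.toEmbedding.sym2Map) := by
  rw [isMaximalMatching_iff] at hM ⊢
  refine ⟨(isMatching_map_iff φ).mpr hM.1, fun a b hab => ?_⟩
  by_cases ha : a ∈ Set.range φ
  · by_cases hb : b ∈ Set.range φ
    · obtain ⟨a, rfl⟩ := ha
      obtain ⟨b, rfl⟩ := hb
      exact (hM.2 a b (φ.map_adj_iff.mp hab)).imp (mem_verts_map φ.toEmbedding).mpr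
        (mem_verts_map φ.toEmbedding).mpr
    · exact .inl (hout b a hab.symm hb)
  · exact .inr (hout a b hab ha)

lemma adj_iff_of_neighborSet_eq (hv : G.neighborSet v = {w}) {x : V} : G.Adj v x ↔ x = w := by
  rw [← G.mem_neighborSet, hv, Set.mem_singleton_iff]

lemma neighborSet_eq_singleton_of_degree_eq_one [Fintype (G.neighborSet v)]
    (hd : G.degree v = 1) (hvw : G.Adj v w) : G.neighborSet v = {w} :=
  Set.ext fun _ => ⟨fun hx => (G.degree_eq_one_iff_existsUnique_adj.mp hd).unique hx hvw,
    fun hx => hx ▸ hvw⟩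

lemma neighborSet_eq_singleton_of_embedding (φ : G ↪g H) {x y : V}
    (h : H.neighborSet (φ x) = {φ y}) : G.neighborSet x = {y} := by
  ext z
  rw [G.mem_neighborSet, ← φ.map_adj_iff, adj_iff_of_neighborSet_eq h, Set.mem_singleton_iff,
    φ.injective.eq_iff]

lemma IsMatching.eq_of_mem_of_neighborSet_eq (hM : IsMatching G M) (he : e ∈ M) (hv : v ∈ e)
    (hvw : G.neighborSet v = {w}) : e = s(v, w) := by
  obtain ⟨x, rfl⟩ := Sym2.mem_iff_exists.mp hv
  rw [(adj_iff_of_neighborSet_eq hvw).mp (G.mem_edgeSet.mp (hM.1 he))]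

lemma IsMatching.eq_of_mem_verts_of_neighborSet_eq (hM : IsMatching G M)
    (hu : G.neighborSet u = {w}) (hv : G.neighborSet v = {w})
    (huM : u ∈ verts M) (hvM : v ∈ verts M) : u = v := by
  obtain ⟨e, he, hue⟩ := huM
  obtain ⟨f, hf, hvf⟩ := hvM
  rw [hM.eq_of_mem_of_neighborSet_eq he hue hu] at he
  rw [hM.eq_of_mem_of_neighborSet_eq hf hvf hv] at hf
  by_contra huv
  exact hM.2 _ he _ hf (mt Sym2.congr_left.mp huv) w (Sym2.mem_mk_right _ _)
    (Sym2.mem_mk_right _ _)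

lemma IsMaximalMatching.mem_verts_of_neighborSet_eq (hM : IsMaximalMatching G M)
    (hv : G.neighborSet v = {w}) : w ∈ verts M := by
  have hvw : G.Adj v w := (adj_iff_of_neighborSet_eq hv).mpr rfl
  rcases (isMaximalMatching_iff.mp hM).2 v w hvw with ⟨e, he, hve⟩ | hw
  · refine ⟨e, he, ?_⟩
    rw [hM.1.eq_of_mem_of_neighborSet_eq he hve hv]
    exact Sym2.mem_mk_right v w
  · exact hw

def isoSwap [DecidableEq V] (h : G.neighborSet u = G.neighborSet v) : G ≃g G where
  toEquiv := Equiv.swap u v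
  map_rel_iff' {a b} := by
    have hadj : ∀ x, G.Adj u x ↔ G.Adj v x := fun x => Set.ext_iff.mp h x
    simp only [Equiv.swap_apply_def]
    split_ifs <;> subst_vars <;> grind [G.adj_comm, G.loopless]

lemma exists_isMaximalMatching_card_eq_minMatchNum [Finite V] (G : SimpleGraph V) :
    ∃ M, IsMaximalMatching G M ∧ M.card = minMatchNum G := by
  suffices hne : {n | ∃ M : Finset (Sym2 V), IsMaximalMatching G M ∧ M.card = n}.Nonempty from
    Nat.sInf_mem hne
  have : Fintype V := Fintype.ofFinite V
  classical
  obtain ⟨M, hM, hmax⟩ := Finset.exists_max_image (Finset.univ.filter (IsMatching G))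
    Finset.card ⟨∅, by simp [IsMatching]⟩
  refine ⟨M.card, M, ⟨(Finset.mem_filter.mp hM).2, fun e _ heM hins => ?_⟩, rfl⟩
  have := hmax _ (Finset.mem_filter.mpr ⟨Finset.mem_univ _, hins⟩)
  rw [Finset.card_insert_of_notMem heM] at this
  omega

lemma minMatchNum_le (hM : IsMaximalMatching G M) : minMatchNum G ≤ M.card :=
  Nat.sInf_le ⟨M, hM, rfl⟩

lemma IsMaximalMatching.exists_notMem_verts_of_neighborSet_eq (hM : IsMaximalMatching G M)
    (huv : u ≠ v) (hu : G.neighborSet u = {w}) (hv : G.neighborSet v = {w}) :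
    ∃ N, IsMaximalMatching G N ∧ N.card = M.card ∧ v ∉ verts N := by
  classical
  by_cases hvM : v ∈ verts M
  · have huM : u ∉ verts M := fun huM =>
      huv (hM.1.eq_of_mem_verts_of_neighborSet_eq hu hv huM hvM)
    let σ := (isoSwap (hu.trans hv.symm)).toEmbedding
    have hvN := (mem_verts_map (M := M) σ.toEmbedding).not.mpr huM
    rw [show σ.toEmbedding u = v from Equiv.swap_apply_left u v] at hvN
    exact ⟨_, hM.map σ fun a _ _ ha => (ha ⟨_, (isoSwap _).apply_symm_apply a⟩).elim,
      Finset.card_map _, hvN⟩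
  · exact ⟨M, hM, rfl, hvM⟩

end

theorem minMatchNum_delete_twin_leaf {V : Type*} [Fintype V] (G : SimpleGraph V)
    [DecidableRel G.Adj] (u v w : V) (huv : u ≠ v)
    (huw : G.Adj u w) (hvw : G.Adj v w)
    (hdu : G.degree u = 1) (hdv : G.degree v = 1) :
    minMatchNum (G.induce ({v}ᶜ : Set V)) = minMatchNum G := by
  have hu := neighborSet_eq_singleton_of_degree_eq_one hdu huw
  have hv := neighborSet_eq_singleton_of_degree_eq_one hdv hvw
  let φ : G.induce ({v}ᶜ : Set V) ↪g G := SimpleGraph.Embedding.induce _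
  have hrange (x : V) : x ∈ Set.range φ ↔ x ≠ v := by simp [φ]
  apply le_antisymm
  · obtain ⟨M, hM, hcard⟩ := exists_isMaximalMatching_card_eq_minMatchNum G
    obtain ⟨N, hN, hNM, hvN⟩ := hM.exists_notMem_verts_of_neighborSet_eq huv hu hv
    obtain ⟨N, rfl⟩ := exists_map_eq_of_verts_subset_range φ.toEmbedding
      fun x hx => (hrange x).mpr fun hxv => hvN (hxv ▸ hx)
    calc minMatchNum _ ≤ N.card := minMatchNum_le (hN.of_map φ)
      _ = minMatchNum G := by rw [← hcard, ← hNM, Finset.card_map]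
  · obtain ⟨M, hM, hcard⟩ := exists_isMaximalMatching_card_eq_minMatchNum (G.induce {v}ᶜ)
    have hwM : w ∈ verts (M.map φ.toEmbedding.sym2Map) :=
      (mem_verts_map (v := ⟨w, hvw.ne'⟩) _).mpr (hM.mem_verts_of_neighborSet_eq
        (neighborSet_eq_singleton_of_embedding φ (x := ⟨u, huv⟩) (y := ⟨w, hvw.ne'⟩) hu))
    have hN : IsMaximalMatching G (M.map φ.toEmbedding.sym2Map) := hM.map φ fun a b hab ha => by
      obtain rfl : a = v := not_not.mp (mt (hrange a).mpr ha)
      rwa [(adj_iff_of_neighborSet_eq hv).mp hab]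
    calc minMatchNum G ≤ (M.map φ.toEmbedding.sym2Map).card := minMatchNum_le hN
      _ = _ := by rw [Finset.card_map, hcard]

end MatchingPaper
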